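/- arXiv:1708.02609 — 4 statements merged into one kernel-verified Lean document; each statement's English description precedes it below -/
import Mathlib

section
/- Let (V1, V2) be a pair of commuting isometries on H with V = V1 V2, W = ker V*, W1 = ker V1*, W2 = ker V2*. Then the map U on W defined by U(η1 ⊕ V1 η2) = V2 η1 ⊕ η2 for η1 ∈ W1, η2 ∈ W2 (with respect to W = W1 ⊕ V1 W2 and W = V2 W1 ⊕ W2) is a unitary operator on W. -/
open ContinuousLinearMap Filter Topology Metric
open scoped InnerProductSpace

open Classical in
/-- Orthogonal projection onto a subspace, as an operator on the ambient space. -/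
noncomputable def projCLM {H : Type*} [NormedAddCommGroup H] [InnerProductSpace ℂ H]
    (K : Submodule ℂ H) : H →L[ℂ] H :=
  if h : K.HasOrthogonalProjection then K.subtypeL.comp (@Submodule.orthogonalProjectionOnto ℂ H _ _ _ K h)
  else 0

/-!
For isometries `A`, `B`, every `x ∈ ker (A B)*` splits orthogonally as `x = η + A ξ` with
`η = x - A A* x ∈ ker A*` and `ξ = A* x ∈ ker B*`. The operator `x ↦ B (x - A A* x) + A* x`
sends it to `B η + ξ`, an orthogonal sum of the same length lying in `ker (B A)*`, and the same
operator with `A`, `B` exchanged undoes it. For commuting `A`, `B` both kernels are `W`.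
-/

namespace ContinuousLinearMap

variable {𝕜 H : Type*} [RCLike 𝕜] [NormedAddCommGroup H] [InnerProductSpace 𝕜 H] [CompleteSpace H]
  {A B : H →L[𝕜] H}

theorem adjoint_apply_apply_of_norm_map (hA : ∀ x, ‖A x‖ = ‖x‖) (x : H) :
    adjoint A (A x) = x := by
  rw [← comp_apply, (norm_map_iff_adjoint_comp_self A).mp hA, one_apply_eq_self]

theorem adjoint_apply_sub_apply_adjoint_apply (hA : ∀ x, ‖A x‖ = ‖x‖) (x : H) :
    adjoint A (x - A (adjoint A x)) = 0 := by
  rw [map_sub, adjoint_apply_apply_of_norm_map hA, sub_self]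

theorem norm_add_apply_mul_self (hA : ∀ x, ‖A x‖ = ‖x‖) {η : H} (hη : adjoint A η = 0) (ξ : H) :
    ‖η + A ξ‖ * ‖η + A ξ‖ = ‖η‖ * ‖η‖ + ‖ξ‖ * ‖ξ‖ := by
  have horth : ⟪η, A ξ⟫_𝕜 = 0 := by rw [← adjoint_inner_left, hη, inner_zero_left]
  rw [norm_add_sq_eq_norm_sq_add_norm_sq_of_inner_eq_zero _ _ horth, hA]

theorem mem_ker_adjoint_comp_iff (x : H) :
    x ∈ LinearMap.ker (adjoint (A ∘L B) : H →ₗ[𝕜] H) ↔ adjoint B (adjoint A x) = 0 := by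
  rw [LinearMap.mem_ker, coe_coe, adjoint_comp, comp_apply]

noncomputable def wanderingSwap (A B : H →L[𝕜] H) : H →L[𝕜] H :=
  B ∘L (1 - A ∘L adjoint A) + adjoint A

theorem wanderingSwap_apply (x : H) :
    wanderingSwap A B x = B (x - A (adjoint A x)) + adjoint A x := by
  simp only [wanderingSwap, add_apply, comp_apply, sub_apply, one_apply_eq_self]

theorem wanderingSwap_apply_add (hA : ∀ x, ‖A x‖ = ‖x‖) {η : H} (hη : adjoint A η = 0) (ξ : H) :
    wanderingSwap A B (η + A ξ) = B η + ξ := by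
  rw [wanderingSwap_apply, map_add (adjoint A), hη, adjoint_apply_apply_of_norm_map hA, zero_add,
    add_sub_cancel_right]

variable {x : H}

theorem wanderingSwap_mem_ker_adjoint_comp (hA : ∀ x, ‖A x‖ = ‖x‖) (hB : ∀ x, ‖B x‖ = ‖x‖)
    (hx : x ∈ LinearMap.ker (adjoint (A ∘L B) : H →ₗ[𝕜] H)) :
    wanderingSwap A B x ∈ LinearMap.ker (adjoint (B ∘L A) : H →ₗ[𝕜] H) := by
  rw [mem_ker_adjoint_comp_iff, wanderingSwap_apply, map_add, (mem_ker_adjoint_comp_iff x).mp hx,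
    adjoint_apply_apply_of_norm_map hB, add_zero, adjoint_apply_sub_apply_adjoint_apply hA]

theorem wanderingSwap_wanderingSwap (hB : ∀ x, ‖B x‖ = ‖x‖)
    (hx : x ∈ LinearMap.ker (adjoint (A ∘L B) : H →ₗ[𝕜] H)) :
    wanderingSwap B A (wanderingSwap A B x) = x := by
  have hξ : adjoint B (adjoint A x) = 0 := (mem_ker_adjoint_comp_iff x).mp hx
  rw [wanderingSwap_apply (A := A) (B := B) x, add_comm, wanderingSwap_apply_add hB hξ, add_sub_cancel]

theorem norm_wanderingSwap (hA : ∀ x, ‖A x‖ = ‖x‖) (hB : ∀ x, ‖B x‖ = ‖x‖)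
    (hx : x ∈ LinearMap.ker (adjoint (A ∘L B) : H →ₗ[𝕜] H)) : ‖wanderingSwap A B x‖ = ‖x‖ := by
  have hη := adjoint_apply_sub_apply_adjoint_apply hA x
  have hξ : adjoint B (adjoint A x) = 0 := (mem_ker_adjoint_comp_iff x).mp hx
  refine mul_self_inj (norm_nonneg _) (norm_nonneg _) |>.mp ?_
  calc ‖wanderingSwap A B x‖ * ‖wanderingSwap A B x‖
      = ‖adjoint A x + B (x - A (adjoint A x))‖ * ‖adjoint A x + B (x - A (adjoint A x))‖ := by
        rw [wanderingSwap_apply, add_comm]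
    _ = ‖x - A (adjoint A x) + A (adjoint A x)‖ * ‖x - A (adjoint A x) + A (adjoint A x)‖ := by
        rw [norm_add_apply_mul_self hB hξ, norm_add_apply_mul_self hA hη, add_comm]
    _ = ‖x‖ * ‖x‖ := by rw [sub_add_cancel]

noncomputable def wanderingSwapEquiv (hA : ∀ x, ‖A x‖ = ‖x‖) (hB : ∀ x, ‖B x‖ = ‖x‖) :
    LinearMap.ker (adjoint (A ∘L B) : H →ₗ[𝕜] H) ≃ₗᵢ[𝕜]
      LinearMap.ker (adjoint (B ∘L A) : H →ₗ[𝕜] H) where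
  toFun x := ⟨wanderingSwap A B x, wanderingSwap_mem_ker_adjoint_comp hA hB x.2⟩
  invFun y := ⟨wanderingSwap B A y, wanderingSwap_mem_ker_adjoint_comp hB hA y.2⟩
  map_add' _ _ := Subtype.ext (map_add _ _ _)
  map_smul' _ _ := Subtype.ext (map_smul _ _ _)
  left_inv x := Subtype.ext (wanderingSwap_wanderingSwap hB x.2)
  right_inv y := Subtype.ext (wanderingSwap_wanderingSwap hA y.2)
  norm_map' x := norm_wanderingSwap hA hB x.2

end ContinuousLinearMap

theorem stmt_5_general {H : Type*} [NormedAddCommGroup H] [InnerProductSpace ℂ H] [CompleteSpace H]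
    (V1 V2 : H →L[ℂ] H) (hV1 : ∀ x, ‖V1 x‖ = ‖x‖) (hV2 : ∀ x, ‖V2 x‖ = ‖x‖)
    (hcomm : V1 ∘L V2 = V2 ∘L V1)
    (V : H →L[ℂ] H) (hV : V = V1 ∘L V2)
    (W W1 W2 : Submodule ℂ H)
    (hW : W = LinearMap.ker (adjoint V : H →ₗ[ℂ] H))
    (hW1 : W1 = LinearMap.ker (adjoint V1 : H →ₗ[ℂ] H)) :
    ∃ U : W ≃ₗᵢ[ℂ] W, ∀ η1 ∈ W1, ∀ η2 ∈ W2, ∀ hm : η1 + V1 η2 ∈ W,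
      (U ⟨η1 + V1 η2, hm⟩ : H) = V2 η1 + η2 := by
  subst hW hV hW1
  refine ⟨(wanderingSwapEquiv hV1 hV2).trans (LinearIsometryEquiv.ofEq _ _ (by rw [hcomm])), ?_⟩
  intro η1 hη1 η2 _ _
  exact wanderingSwap_apply_add hV1 hη1 η2

theorem stmt_5 {H : Type*} [NormedAddCommGroup H] [InnerProductSpace ℂ H] [CompleteSpace H]
    (V1 V2 : H →L[ℂ] H) (hV1 : ∀ x, ‖V1 x‖ = ‖x‖) (hV2 : ∀ x, ‖V2 x‖ = ‖x‖)
    (hcomm : V1 ∘L V2 = V2 ∘L V1)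
    (V : H →L[ℂ] H) (hV : V = V1 ∘L V2)
    (W W1 W2 : Submodule ℂ H)
    (hW : W = LinearMap.ker (adjoint V : H →ₗ[ℂ] H))
    (hW1 : W1 = LinearMap.ker (adjoint V1 : H →ₗ[ℂ] H))
    (hW2 : W2 = LinearMap.ker (adjoint V2 : H →ₗ[ℂ] H)) :
    ∃ U : W ≃ₗᵢ[ℂ] W, ∀ η1 ∈ W1, ∀ η2 ∈ W2, ∀ hm : η1 + V1 η2 ∈ W,
      (U ⟨η1 + V1 η2, hm⟩ : H) = V2 η1 + η2 :=
  stmt_5_general V1 V2 hV1 hV2 hcomm V hV W W1 W2 hW hW1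
end

section
/- Let (V1, V2) be commuting isometries on H, V = V1V2, W = ker V*, W1 = ker V1*, W2 = ker V2*. Then P_W V1 = V1 P_{W2} and P_W V2 = V2 P_{W1}, where P_S denotes the orthogonal projection onto S. -/
open ContinuousLinearMap Filter Topology Metric
open scoped InnerProductSpace

/-!
For an isometry `T` the projection onto `ker T* = H ⊖ TH` is `1 - T T*`. Hence, with `V = AB`,
`P_{ker V*} A = A - A B B* A* A = A - A B B* = A P_{ker B*}`; the second identity is the first one
for the factorisation `V = V2 V1`, which is where commutativity enters.
-/

lemma projCLM_eq_starProjection {H : Type*} [NormedAddCommGroup H] [InnerProductSpace ℂ H]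
    (K : Submodule ℂ H) [K.HasOrthogonalProjection] : projCLM K = K.starProjection := by
  rw [projCLM, dif_pos ‹_›, Submodule.starProjection]

lemma starProjection_ker_adjoint {𝕜 E : Type*} [RCLike 𝕜] [NormedAddCommGroup E]
    [InnerProductSpace 𝕜 E] [CompleteSpace E] {T : E →L[𝕜] E} (hT : adjoint T ∘L T = 1) :
    (LinearMap.ker (adjoint T : E →ₗ[𝕜] E)).starProjection = 1 - T ∘L adjoint T := by
  have hTT (x : E) : adjoint T (T x) = x := by simpa using congr($hT x)
  ext x
  refine Submodule.eq_starProjection_of_mem_orthogonal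
    (K := LinearMap.ker (adjoint T : E →ₗ[𝕜] E)) ?mem ?orth
  case mem => simp [hTT]
  case orth =>
    rw [show x - (1 - T ∘L adjoint T) x = T (adjoint T x) by simp]
    intro y hy
    rw [LinearMap.mem_ker, coe_coe] at hy
    rw [← adjoint_inner_left, hy, inner_zero_left]

lemma projCLM_ker_adjoint_comp_comp {H : Type*} [NormedAddCommGroup H] [InnerProductSpace ℂ H]
    [CompleteSpace H] {A B : H →L[ℂ] H} (hA : adjoint A ∘L A = 1) (hB : adjoint B ∘L B = 1) :
    projCLM (LinearMap.ker (adjoint (A ∘L B) : H →ₗ[ℂ] H)) ∘L A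
      = A ∘L projCLM (LinearMap.ker (adjoint B : H →ₗ[ℂ] H)) := by
  have hAB : adjoint (A ∘L B) ∘L (A ∘L B) = 1 := by
    rw [adjoint_comp, comp_assoc, ← comp_assoc _ A, hA]
    exact hB
  rw [projCLM_eq_starProjection, projCLM_eq_starProjection, starProjection_ker_adjoint hAB,
    starProjection_ker_adjoint hB, sub_comp, comp_sub, adjoint_comp]
  simp only [← mul_def] at hA ⊢
  calc 1 * A - A * B * (adjoint B * adjoint A) * A
      = A - A * B * adjoint B * (adjoint A * A) := by noncomm_ring
    _ = A * 1 - A * (B * adjoint B) := by rw [hA]; noncomm_ring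

theorem stmt_6 {H : Type*} [NormedAddCommGroup H] [InnerProductSpace ℂ H] [CompleteSpace H]
    (V1 V2 : H →L[ℂ] H) (hV1 : ∀ x, ‖V1 x‖ = ‖x‖) (hV2 : ∀ x, ‖V2 x‖ = ‖x‖)
    (hcomm : V1 ∘L V2 = V2 ∘L V1)
    (V : H →L[ℂ] H) (hV : V = V1 ∘L V2)
    (W W1 W2 : Submodule ℂ H)
    (hW : W = LinearMap.ker (adjoint V : H →ₗ[ℂ] H))
    (hW1 : W1 = LinearMap.ker (adjoint V1 : H →ₗ[ℂ] H))
    (hW2 : W2 = LinearMap.ker (adjoint V2 : H →ₗ[ℂ] H)) :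
    projCLM W ∘L V1 = V1 ∘L projCLM W2 ∧ projCLM W ∘L V2 = V2 ∘L projCLM W1 := by
  have h1 := (norm_map_iff_adjoint_comp_self V1).mp hV1
  have h2 := (norm_map_iff_adjoint_comp_self V2).mp hV2
  subst hW hW1 hW2 hV
  exact ⟨projCLM_ker_adjoint_comp_comp h1 h2, hcomm ▸ projCLM_ker_adjoint_comp_comp h2 h1⟩
end

section
/- Let (V1, V2) be a pair of commuting isometries on H with wandering subspaces W1 = ker V1* and W2 = ker V2*. Then the following are equivalent: (i) (V1, V2) is doubly commuting, i.e., V1*V2 = V2V1*; (ii) V2 W1 ⊆ W1; (iii) V1 W2 ⊆ W2. -/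
/-!
If `A` is an isometry commuting with `B`, then `A* B A = A* A B = B`, so `A* B = B A*` holds on
the range of `A`. Every vector splits as `A A* x + (x - A A* x)` with the second summand in
`ker A*`, so `A* B = B A*` holds everywhere exactly when it holds on `ker A*`, i.e. when `B`
leaves the wandering subspace `ker A*` invariant. The condition for the other pair follows
by taking adjoints.
-/

open ContinuousLinearMap Filter Topology Metric
open scoped InnerProductSpace

section DoublyCommuting

variable {𝕜 E : Type*} [RCLike 𝕜] [NormedAddCommGroup E] [InnerProductSpace 𝕜 E]
  [CompleteSpace E]

lemma adjoint_comp_comm_iff_symm {A B : E →L[𝕜] E} :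
    adjoint A ∘L B = B ∘L adjoint A ↔ adjoint B ∘L A = A ∘L adjoint B := by
  constructor <;> intro h <;> simpa only [adjoint_comp, adjoint_adjoint] using congrArg adjoint h

lemma mapsTo_ker_adjoint_of_adjoint_comp_comm {A B : E →L[𝕜] E}
    (h : adjoint A ∘L B = B ∘L adjoint A) :
    ∀ x ∈ LinearMap.ker (adjoint A : E →ₗ[𝕜] E), B x ∈ LinearMap.ker (adjoint A : E →ₗ[𝕜] E) := by
  intro x hx
  rw [LinearMap.mem_ker, coe_coe] at hx ⊢
  rw [← comp_apply, h, comp_apply, hx, map_zero]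

lemma adjoint_comp_comm_of_mapsTo_ker_adjoint {A B : E →L[𝕜] E} (hA : adjoint A ∘L A = 1)
    (hAB : A ∘L B = B ∘L A)
    (hB : ∀ x ∈ LinearMap.ker (adjoint A : E →ₗ[𝕜] E),
      B x ∈ LinearMap.ker (adjoint A : E →ₗ[𝕜] E)) :
    adjoint A ∘L B = B ∘L adjoint A := by
  have hBA : adjoint A ∘L B ∘L A = B := by rw [← hAB, ← comp_assoc, hA, one_def, id_comp]
  ext x
  have hw : adjoint A (x - A (adjoint A x)) = 0 := by
    rw [map_sub, ← comp_apply (adjoint A) A, hA, one_def, id_apply, sub_self]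
  have hBw : adjoint A (B (x - A (adjoint A x))) = 0 := hB _ hw
  rw [map_sub, map_sub, sub_eq_zero] at hBw
  rw [comp_apply, hBw, ← comp_apply B, ← comp_apply (adjoint A), hBA, comp_apply]

lemma adjoint_comp_comm_iff_mapsTo_ker_adjoint {A B : E →L[𝕜] E} (hA : ∀ x, ‖A x‖ = ‖x‖)
    (hAB : A ∘L B = B ∘L A) :
    adjoint A ∘L B = B ∘L adjoint A ↔
      ∀ x ∈ LinearMap.ker (adjoint A : E →ₗ[𝕜] E), B x ∈ LinearMap.ker (adjoint A : E →ₗ[𝕜] E) :=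
  ⟨mapsTo_ker_adjoint_of_adjoint_comp_comm,
    adjoint_comp_comm_of_mapsTo_ker_adjoint ((norm_map_iff_adjoint_comp_self A).mp hA) hAB⟩

end DoublyCommuting

theorem stmt_11 {H : Type*} [NormedAddCommGroup H] [InnerProductSpace ℂ H] [CompleteSpace H]
    (V1 V2 : H →L[ℂ] H) (hV1 : ∀ x, ‖V1 x‖ = ‖x‖) (hV2 : ∀ x, ‖V2 x‖ = ‖x‖)
    (hcomm : V1 ∘L V2 = V2 ∘L V1)
    (W1 W2 : Submodule ℂ H)
    (hW1 : W1 = LinearMap.ker (adjoint V1 : H →ₗ[ℂ] H))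
    (hW2 : W2 = LinearMap.ker (adjoint V2 : H →ₗ[ℂ] H)) :
    (adjoint V1 ∘L V2 = V2 ∘L adjoint V1 ↔ ∀ x ∈ W1, V2 x ∈ W1) ∧
    (adjoint V1 ∘L V2 = V2 ∘L adjoint V1 ↔ ∀ x ∈ W2, V1 x ∈ W2) := by
  subst hW1 hW2
  exact ⟨adjoint_comp_comm_iff_mapsTo_ker_adjoint hV1 hcomm,
    adjoint_comp_comm_iff_symm.trans (adjoint_comp_comm_iff_mapsTo_ker_adjoint hV2 hcomm.symm)⟩
end

section
/- Let (V1, V2) be commuting isometries on H such that V2 is a pure isometry. If the defect operator C(V1,V2) = I − V1V1* − V2V2* + V1V2V1*V2* is negative semidefinite (C(V1,V2) ≤ 0), then C(V1,V2) = 0. Moreover, in that case ker V1* = {0}, i.e., V1 is unitary. -/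
/-!
On `W = ker V1†` the defect acts as `1 - V2 V2†`, a projection, so `C ≤ 0` forces
`x = V2 (V2† x)` for every `x ∈ W`; as the adjoints commute, `V2† x ∈ W`. Hence `W ≤ V2 W`,
so `W` lies in every `range V2^m` and vanishes by purity. Then `V1` is unitary, and
`V1 V2 V1† V2† = V2 (V1 V1†) V2† = V2 V2†` makes the defect vanish.
-/

open ContinuousLinearMap Filter Topology Metric
open scoped InnerProductSpace

theorem Submodule.le_range_pow_of_le_map {R M : Type*} [Semiring R] [AddCommMonoid M] [Module R M]
    {f : M →ₗ[R] M} {p : Submodule R M} (hp : p ≤ p.map f) (n : ℕ) :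
    p ≤ LinearMap.range (f ^ n) := by
  suffices p ≤ p.map (f ^ n) from this.trans LinearMap.map_le_range
  induction n with
  | zero => rw [pow_zero, Module.End.one_eq_id, Submodule.map_id]
  | succ n ih =>
    calc p ≤ p.map f := hp
      _ ≤ (p.map (f ^ n)).map f := Submodule.map_mono ih
      _ = p.map (f ^ (n + 1)) := by rw [pow_succ', Module.End.mul_eq_comp, Submodule.map_comp]

namespace ContinuousLinearMap

section Isometry

variable {𝕜 E F : Type*} [RCLike 𝕜] [NormedAddCommGroup E] [InnerProductSpace 𝕜 E] [CompleteSpace E]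
  [NormedAddCommGroup F] [InnerProductSpace 𝕜 F] [CompleteSpace F]

theorem re_inner_sub_apply_adjoint_apply {V : E →L[𝕜] F} (hV : adjoint V ∘L V = 1) (x : F) :
    RCLike.re ⟪x - V (adjoint V x), x⟫_𝕜 = ‖x - V (adjoint V x)‖ ^ 2 := by
  set y := x - V (adjoint V x)
  have hy : adjoint V y = 0 := by
    simp [y, ← comp_apply (adjoint V) V, hV]
  have : ⟪y, x⟫_𝕜 = ⟪y, y⟫_𝕜 := by
    rw [show x = y + V (adjoint V x) by simp [y], inner_add_right, ← adjoint_inner_left, hy]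
    simp
  rw [this, inner_self_eq_norm_sq]

theorem comp_adjoint_eq_one_of_ker_adjoint_eq_bot {V : E →L[𝕜] F} (hV : adjoint V ∘L V = 1)
    (hker : LinearMap.ker ((adjoint V : F →L[𝕜] E) : F →ₗ[𝕜] E) = ⊥) : V ∘L adjoint V = 1 := by
  ext y
  have : y - V (adjoint V y) ∈ LinearMap.ker ((adjoint V : F →L[𝕜] E) : F →ₗ[𝕜] E) := by
    simp [← comp_apply (adjoint V) V, hV]
  rw [hker, Submodule.mem_bot, sub_eq_zero] at this
  exact this.symm

end Isometry

variable {H : Type*} [NormedAddCommGroup H] [InnerProductSpace ℂ H] [CompleteSpace H]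

noncomputable def defect (V1 V2 : H →L[ℂ] H) : H →L[ℂ] H :=
  1 - V1 ∘L adjoint V1 - V2 ∘L adjoint V2 + V1 ∘L V2 ∘L adjoint V1 ∘L adjoint V2

theorem defect_apply_of_adjoint_apply_eq_zero {V1 V2 : H →L[ℂ] H} (hcomm : V1 ∘L V2 = V2 ∘L V1)
    {x : H} (hx : adjoint V1 x = 0) : defect V1 V2 x = x - V2 (adjoint V2 x) := by
  have hadj : adjoint V1 (adjoint V2 x) = adjoint V2 (adjoint V1 x) := by
    rw [← comp_apply, ← comp_apply, ← adjoint_comp, ← adjoint_comp, hcomm]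
  simp [defect, hadj, hx]

theorem defect_eq_zero_of_comp_adjoint_eq_one {V1 V2 : H →L[ℂ] H} (hcomm : V1 ∘L V2 = V2 ∘L V1)
    (hV1 : V1 ∘L adjoint V1 = 1) : defect V1 V2 = 0 := by
  have : V1 ∘L V2 ∘L adjoint V1 ∘L adjoint V2 = V2 ∘L adjoint V2 := by
    rw [← comp_assoc, hcomm, comp_assoc, ← comp_assoc V1, hV1, one_def, id_comp]
  rw [defect, this, hV1]
  abel

theorem ker_adjoint_le_map_of_isPositive_neg_defect {V1 V2 : H →L[ℂ] H}
    (hcomm : V1 ∘L V2 = V2 ∘L V1) (hV2 : adjoint V2 ∘L V2 = 1)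
    (hneg : (-defect V1 V2).IsPositive) :
    LinearMap.ker ((adjoint V1 : H →L[ℂ] H) : H →ₗ[ℂ] H) ≤
      (LinearMap.ker ((adjoint V1 : H →L[ℂ] H) : H →ₗ[ℂ] H)).map (V2 : H →ₗ[ℂ] H) := by
  intro x hx
  rw [LinearMap.mem_ker, coe_coe] at hx
  have hnonpos : ‖x - V2 (adjoint V2 x)‖ ^ 2 ≤ 0 := by
    have := hneg.re_inner_nonneg_left x
    rw [neg_apply, inner_neg_left, map_neg, defect_apply_of_adjoint_apply_eq_zero hcomm hx,
      re_inner_sub_apply_adjoint_apply hV2] at this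
    linarith
  have hfix : V2 (adjoint V2 x) = x := by
    rw [eq_comm, ← sub_eq_zero, ← norm_eq_zero]
    exact (_root_.sq_nonpos_iff _).mp hnonpos
  refine ⟨adjoint V2 x, ?_, hfix⟩
  rw [SetLike.mem_coe, LinearMap.mem_ker, coe_coe, ← comp_apply, ← adjoint_comp, ← hcomm,
    adjoint_comp, comp_apply, hx, map_zero]

end ContinuousLinearMap

theorem stmt_17 {H : Type*} [NormedAddCommGroup H] [InnerProductSpace ℂ H] [CompleteSpace H]
    (V1 V2 : H →L[ℂ] H) (hV1 : ∀ x, ‖V1 x‖ = ‖x‖) (hV2 : ∀ x, ‖V2 x‖ = ‖x‖)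
    (hcomm : V1 ∘L V2 = V2 ∘L V1)
    (hpure : (⨅ m : ℕ, LinearMap.range ((V2 ^ m : H →L[ℂ] H) : H →ₗ[ℂ] H))
      = (⊥ : Submodule ℂ H))
    (C : H →L[ℂ] H)
    (hCdef : C = 1 - V1 ∘L adjoint V1 - V2 ∘L adjoint V2
        + V1 ∘L V2 ∘L adjoint V1 ∘L adjoint V2)
    (hneg : (-C).IsPositive) :
    C = 0 ∧ LinearMap.ker ((adjoint V1 : H →L[ℂ] H) : H →ₗ[ℂ] H) = (⊥ : Submodule ℂ H) := by
  change C = defect V1 V2 at hCdef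
  subst hCdef
  have hker : LinearMap.ker ((adjoint V1 : H →L[ℂ] H) : H →ₗ[ℂ] H) = ⊥ := by
    have hinv := ker_adjoint_le_map_of_isPositive_neg_defect hcomm
      ((norm_map_iff_adjoint_comp_self V2).mp hV2) hneg
    rw [eq_bot_iff, ← hpure, le_iInf_iff]
    intro m
    rw [toLinearMap_pow]
    exact Submodule.le_range_pow_of_le_map hinv m
  have hunitary := comp_adjoint_eq_one_of_ker_adjoint_eq_bot
    ((norm_map_iff_adjoint_comp_self V1).mp hV1) hker
  exact ⟨defect_eq_zero_of_comp_adjoint_eq_one hcomm hunitary, hker⟩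
end
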